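/- arXiv:2002.12362 — 2 statements merged into one kernel-verified Lean document; each statement's English description precedes it below -/
import Mathlib

section
/- Validity of the big-M MILP formulation of individual output selection: fix a DMU k with at least one strictly positive input, an integer p with 1 ≤ p ≤ O, and a constant M such that M ≥ 1/y_o^(k) for every output o with y_o^(k) > 0. Then the supremum, over all (α, β, z) with α ∈ ℝ^I, α ≥ 0, β ∈ ℝ^O, β ≥ 0, z ∈ {0,1}^O, Σ_{o=1}^O β_o y_o^(j) ≤ Σ_{i=1}^I α_i x_i^(j) for all j = 1,…,K, Σ_{i=1}^I α_i x_i^(k) = 1, β_o ≤ M z_o for all o, and Σ_{o=1}^O z_o = p, of the objective Σ_{o=1}^O β_o y_o^(k), equals v^(k)(p) = max { E^(k)(S) : S ⊆ {1,…,O}, |S| = p }. -/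
open Finset

/-- Feasible set `F^(k)(S)` of the CRS input-oriented DEA model of DMU `k`
with allowed output set `S`. -/
def DEAfeasible {K I O : ℕ} (x : Fin K → Fin I → ℝ) (y : Fin K → Fin O → ℝ)
    (k : Fin K) (S : Finset (Fin O)) (α : Fin I → ℝ) (β : Fin O → ℝ) : Prop :=
  (∀ i, 0 ≤ α i) ∧ (∀ o, 0 ≤ β o) ∧ (∀ o, o ∉ S → β o = 0) ∧
  (∀ j, ∑ o, β o * y j o ≤ ∑ i, α i * x j i) ∧ (∑ i, α i * x k i = 1)

/-- CRS input-oriented DEA efficiency `E^(k)(S)` of DMU `k` with allowed outputs `S`. -/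
noncomputable def DEAeff {K I O : ℕ} (x : Fin K → Fin I → ℝ) (y : Fin K → Fin O → ℝ)
    (k : Fin K) (S : Finset (Fin O)) : ℝ :=
  sSup {t | ∃ α β, DEAfeasible x y k S α β ∧ t = ∑ o, β o * y k o}

/-- Individual selection value `v^(k)(p)`. -/
noncomputable def vInd {K I O : ℕ} (x : Fin K → Fin I → ℝ) (y : Fin K → Fin O → ℝ)
    (k : Fin K) (p : ℕ) : ℝ :=
  sSup {t | ∃ S : Finset (Fin O), S.card = p ∧ t = DEAeff x y k S}

/-- Joint selection value `v(p)`. -/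
noncomputable def vJoint {K I O : ℕ} (x : Fin K → Fin I → ℝ) (y : Fin K → Fin O → ℝ)
    (p : ℕ) : ℝ :=
  sSup {t | ∃ S : Finset (Fin O), S.card = p ∧
    t = (1 / (K : ℝ)) * ∑ k, DEAeff x y k S}

/-!
A feasible point `(α, β, z)` of the big-M program is DEA-feasible for the output set
`S = {o | z o = 1}`, which has `p` elements, since `0 ≤ β ≤ M z` forces `β = 0` off `S`.
Conversely, a DEA-feasible `(α, β)` for `|S| = p` satisfies `β o * y k o ≤ 1`, so after setting
`β o := 0` wherever `y k o = 0` (which changes neither the objective nor feasibility) it satisfies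
`β ≤ M · 1_S`. Hence, for `M ≥ 0`, both suprema are taken over the same set of values, which
lies in `[0, 1]`. If `M < 0`, the bound on `M` forces `y k = 0`, and both sides are `0`.
-/

/-- An empty member has (junk) supremum `0`, which is below the supremum of any nonempty one. -/
theorem Real.sSup_biUnion_eq_sSup_image_sSup {ι : Type*} {P : Set ι} {D : ι → Set ℝ}
    (hD : ∀ s ∈ P, ∀ t ∈ D s, 0 ≤ t) (hbdd : BddAbove (⋃ s ∈ P, D s)) :
    sSup (⋃ s ∈ P, D s) = sSup ((fun s => sSup (D s)) '' P) := by
  have hunion : 0 ≤ sSup (⋃ s ∈ P, D s) := Real.sSup_nonneg fun t ht => by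
    obtain ⟨s, hs, ht⟩ := Set.mem_iUnion₂.1 ht
    exact hD s hs t ht
  have hD_le : ∀ s ∈ P, sSup (D s) ≤ sSup (⋃ s ∈ P, D s) := fun s hs =>
    Real.sSup_le (fun t ht => le_csSup hbdd (Set.mem_biUnion hs ht)) hunion
  apply le_antisymm
  · refine Real.sSup_le (fun t ht => ?_)
      (Real.sSup_nonneg (Set.forall_mem_image.2 fun s hs => Real.sSup_nonneg (hD s hs)))
    obtain ⟨s, hs, ht⟩ := Set.mem_iUnion₂.1 ht
    exact (le_csSup (hbdd.mono (Set.subset_biUnion_of_mem hs)) ht).trans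
      (le_csSup ⟨_, Set.forall_mem_image.2 hD_le⟩ ⟨s, hs, rfl⟩)
  · exact Real.sSup_le (Set.forall_mem_image.2 hD_le) hunion

theorem Real.sSup_eq_zero_of_subset_singleton_zero {s : Set ℝ} (hs : s ⊆ {0}) : sSup s = 0 :=
  le_antisymm (Real.sSup_nonpos fun _ ht => (hs ht).le) (Real.sSup_nonneg fun _ ht => (hs ht).ge)

theorem Finset.sum_eq_card_filter_of_forall_eq_zero_or_one {ι R : Type*} [Fintype ι]
    [AddCommMonoidWithOne R] {z : ι → R} [DecidablePred fun i => z i = 1]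
    (hz : ∀ i, z i = 0 ∨ z i = 1) :
    ∑ i, z i = (univ.filter fun i => z i = 1).card := by
  rw [Finset.natCast_card_filter]
  exact Finset.sum_congr rfl fun i _ => by rcases hz i with h | h <;> simp [h]

section DEA

variable {K I O : ℕ} {x : Fin K → Fin I → ℝ} {y : Fin K → Fin O → ℝ} {k : Fin K}
  {S : Finset (Fin O)} {α : Fin I → ℝ} {β : Fin O → ℝ} {M : ℝ} {p : ℕ}

variable (x y k) in
def deaValues (S : Finset (Fin O)) : Set ℝ :=
  {t | ∃ α β, DEAfeasible x y k S α β ∧ t = ∑ o, β o * y k o}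

variable (x y k) in
def selectionValues (p : ℕ) : Set ℝ :=
  ⋃ S ∈ {S : Finset (Fin O) | S.card = p}, deaValues x y k S

variable (x y k) in
def bigMValues (M : ℝ) (p : ℕ) : Set ℝ :=
  {t | ∃ (α : Fin I → ℝ) (β : Fin O → ℝ) (z : Fin O → ℝ),
    (∀ i, 0 ≤ α i) ∧ (∀ o, 0 ≤ β o) ∧ (∀ o, z o = 0 ∨ z o = 1) ∧
    (∀ j, ∑ o, β o * y j o ≤ ∑ i, α i * x j i) ∧
    (∑ i, α i * x k i = 1) ∧
    (∀ o, β o ≤ M * z o) ∧ (∑ o, z o) = (p : ℝ) ∧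
    t = ∑ o, β o * y k o}

theorem DEAfeasible.objective_le_one (h : DEAfeasible x y k S α β) :
    ∑ o, β o * y k o ≤ 1 :=
  h.2.2.2.2 ▸ h.2.2.2.1 k

theorem DEAfeasible.objective_nonneg (hy : ∀ o, 0 ≤ y k o) (h : DEAfeasible x y k S α β) :
    0 ≤ ∑ o, β o * y k o :=
  Finset.sum_nonneg fun o _ => mul_nonneg (h.2.1 o) (hy o)

theorem DEAfeasible.le_one_div (hy : ∀ o, 0 ≤ y k o) (h : DEAfeasible x y k S α β) {o : Fin O}
    (ho : 0 < y k o) : β o ≤ 1 / y k o := by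
  rw [le_div_iff₀ ho]
  calc β o * y k o ≤ ∑ o, β o * y k o :=
        Finset.single_le_sum (fun o _ => mul_nonneg (h.2.1 o) (hy o)) (Finset.mem_univ o)
    _ ≤ 1 := h.objective_le_one

theorem deaValues_subset_Icc (hy : ∀ o, 0 ≤ y k o) (S : Finset (Fin O)) :
    deaValues x y k S ⊆ Set.Icc 0 1 := by
  rintro t ⟨α, β, h, rfl⟩
  exact ⟨h.objective_nonneg hy, h.objective_le_one⟩

theorem selectionValues_subset_Icc (hy : ∀ o, 0 ≤ y k o) (p : ℕ) :
    selectionValues x y k p ⊆ Set.Icc 0 1 :=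
  Set.iUnion₂_subset fun S _ => deaValues_subset_Icc hy S

theorem selectionValues_subset_singleton_zero (hy : ∀ o, y k o = 0) (p : ℕ) :
    selectionValues x y k p ⊆ {0} := by
  intro t ht
  obtain ⟨S, -, α, β, -, rfl⟩ := Set.mem_iUnion₂.1 ht
  simp [hy]

theorem vInd_eq_sSup_selectionValues (hy : ∀ o, 0 ≤ y k o) (p : ℕ) :
    vInd x y k p = sSup (selectionValues x y k p) := by
  rw [selectionValues, Real.sSup_biUnion_eq_sSup_image_sSup
    (fun S _ _ ht => (deaValues_subset_Icc hy S ht).1)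
    (bddAbove_Icc.mono (selectionValues_subset_Icc hy p))]
  unfold vInd
  congr 1
  ext t
  simp only [Set.mem_image, Set.mem_ofPred_eq, eq_comm (a := t)]
  rfl

theorem bigMValues_subset_selectionValues (M : ℝ) (p : ℕ) :
    bigMValues x y k M p ⊆ selectionValues x y k p := by
  rintro t ⟨α, β, z, hα, hβ, hz, hcon, hnorm, hβM, hzp, rfl⟩
  refine Set.mem_biUnion (x := univ.filter fun o => z o = 1) ?_
    ⟨α, β, ⟨hα, hβ, fun o ho => ?_, hcon, hnorm⟩, rfl⟩
  · exact_mod_cast (Finset.sum_eq_card_filter_of_forall_eq_zero_or_one hz).symm.trans hzp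
  · have hzo : z o = 0 := (hz o).resolve_right fun h => ho (by simp [h])
    exact le_antisymm (by simpa [hzo] using hβM o) (hβ o)

theorem selectionValues_subset_bigMValues (hy : ∀ j o, 0 ≤ y j o)
    (hM : ∀ o, 0 < y k o → 1 / y k o ≤ M) (hM₀ : 0 ≤ M) :
    selectionValues x y k p ⊆ bigMValues x y k M p := by
  intro t ht
  obtain ⟨S, hS, α, β, h, rfl⟩ := Set.mem_iUnion₂.1 ht
  have ⟨hα, hβ, hβS, hcon, hnorm⟩ := h
  have hβ'_le : ∀ o, (if 0 < y k o then β o else 0) ≤ β o := fun o => by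
    split_ifs <;> simp [hβ o]
  refine ⟨α, fun o => if 0 < y k o then β o else 0, fun o => if o ∈ S then 1 else 0,
    hα, fun o => by dsimp only; split_ifs <;> simp [hβ o],
    fun o => by dsimp only; split_ifs <;> simp,
    fun j => (Finset.sum_le_sum fun o _ => mul_le_mul_of_nonneg_right (hβ'_le o) (hy j o)).trans
      (hcon j), hnorm, fun o => ?_, by simpa using hS, ?_⟩
  · by_cases hoS : o ∈ S
    · by_cases hpos : 0 < y k o
      · simpa [hoS, hpos] using (h.le_one_div (hy k) hpos).trans (hM o hpos)
      · simpa [hoS, hpos] using hM₀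
    · simpa [hoS] using (hβ'_le o).trans_eq (hβS o hoS)
  · refine Finset.sum_congr rfl fun o _ => ?_
    rcases (hy k o).eq_or_lt with h0 | hpos
    · simp [← h0]
    · simp [hpos]

end DEA

theorem bigM_MILP_valid_general
    {K I O : ℕ} (x : Fin K → Fin I → ℝ) (y : Fin K → Fin O → ℝ)
    (hy : ∀ j o, 0 ≤ y j o)
    (k : Fin K)
    (p : ℕ)
    (M : ℝ) (hM : ∀ o, 0 < y k o → 1 / y k o ≤ M) :
    sSup {t | ∃ (α : Fin I → ℝ) (β : Fin O → ℝ) (z : Fin O → ℝ),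
        (∀ i, 0 ≤ α i) ∧ (∀ o, 0 ≤ β o) ∧ (∀ o, z o = 0 ∨ z o = 1) ∧
        (∀ j, ∑ o, β o * y j o ≤ ∑ i, α i * x j i) ∧
        (∑ i, α i * x k i = 1) ∧
        (∀ o, β o ≤ M * z o) ∧ (∑ o, z o) = (p : ℝ) ∧
        t = ∑ o, β o * y k o}
      = vInd x y k p := by
  change sSup (bigMValues x y k M p) = _
  rw [vInd_eq_sSup_selectionValues (hy k)]
  have hsub := bigMValues_subset_selectionValues (x := x) (y := y) (k := k) M p
  rcases le_or_gt 0 M with hM₀ | hM₀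
  · rw [hsub.antisymm (selectionValues_subset_bigMValues hy hM hM₀)]
  · have hyk : ∀ o, y k o = 0 := fun o => ((hy k o).eq_or_lt.resolve_right fun hpos =>
      ((hM o hpos).trans_lt hM₀).not_ge (by positivity)).symm
    have hzero := selectionValues_subset_singleton_zero (x := x) hyk p
    rw [Real.sSup_eq_zero_of_subset_singleton_zero hzero,
      Real.sSup_eq_zero_of_subset_singleton_zero (hsub.trans hzero)]

/-- Validity of the big-M MILP formulation of individual output selection:
for a DMU `k` with a strictly positive input, `1 ≤ p ≤ O`, and `M ≥ 1 / y k o` for every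
output `o` with `y k o > 0`, the supremum of the MILP objective over its feasible region
equals the individual selection value `v^(k)(p)`. -/
theorem bigM_MILP_valid
    {K I O : ℕ} (x : Fin K → Fin I → ℝ) (y : Fin K → Fin O → ℝ)
    (hx : ∀ j i, 0 ≤ x j i) (hy : ∀ j o, 0 ≤ y j o)
    (k : Fin K) (hk : ∃ i, 0 < x k i)
    (p : ℕ) (hp1 : 1 ≤ p) (hpO : p ≤ O)
    (M : ℝ) (hM : ∀ o, 0 < y k o → 1 / y k o ≤ M) :
    sSup {t | ∃ (α : Fin I → ℝ) (β : Fin O → ℝ) (z : Fin O → ℝ),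
        (∀ i, 0 ≤ α i) ∧ (∀ o, 0 ≤ β o) ∧ (∀ o, z o = 0 ∨ z o = 1) ∧
        (∀ j, ∑ o, β o * y j o ≤ ∑ i, α i * x j i) ∧
        (∑ i, α i * x k i = 1) ∧
        (∀ o, β o ≤ M * z o) ∧ (∑ o, z o) = (p : ℝ) ∧
        t = ∑ o, β o * y k o}
      = vInd x y k p :=
  bigM_MILP_valid_general x y hy k p M hM
end

section
/- The joint selection value v(p) is not a concave function of p in general: for the Table 1 instance, v(1) = 4/5, v(2) = 13/15, and v(3) = 1, so that v(3) − v(2) > v(2) − v(1). -/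
open Finset

/-- Table 1 instance: single input equal to 1 for each of the 5 DMUs. -/
def xT1 : Fin 5 → Fin 1 → ℝ := fun _ _ => 1

/-- Table 1 instance: the 4 outputs of the 5 DMUs. -/
noncomputable def yT1 : Fin 5 → Fin 4 → ℝ :=
  ![![0.6, 1/3, 1/3, 1/3],
    ![0.7, 1/3, 1/3, 1/3],
    ![0.8, 1, 0, 0],
    ![0.9, 0, 1, 0],
    ![1, 0, 0, 1]]

/-! With the unit input, `E^(k)(S)` is the maximum of `β · y^(k)` over weights `β ≥ 0` supported
on `S` with `β · y^(j) ≤ 1` for every DMU `j`. For a single output `o` this gives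
`E^(k)({o}) ≤ y_o^(k) / y_o^(j)` for every `j`, so `∑ₖ E^(k)({o})` is at most the column sum of
`o`, at most `4`. For the six pairs, per-DMU bounds are checked by linear arithmetic (which finds
the LP dual certificates) and sum to at most `13/3`. Both bounds are attained, at `S = {0}` and
`S = {0, 1}` (outputs are indexed from `0`), by one weight `β` serving all DMUs at once; and
`S = {1, 2, 3}` makes every DMU efficient. -/

section General

variable {K I O : ℕ} {x : Fin K → Fin I → ℝ} {y : Fin K → Fin O → ℝ} {k : Fin K}
  {S : Finset (Fin O)}

theorem DEAfeasible.sum_le_one {α : Fin I → ℝ} {β : Fin O → ℝ}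
    (h : DEAfeasible x y k S α β) : ∑ o, β o * y k o ≤ 1 :=
  (h.2.2.2.1 k).trans_eq h.2.2.2.2

theorem le_DEAeff {α : Fin I → ℝ} {β : Fin O → ℝ} (h : DEAfeasible x y k S α β) :
    ∑ o, β o * y k o ≤ DEAeff x y k S :=
  le_csSup ⟨1, by rintro _ ⟨α, β, h, rfl⟩; exact h.sum_le_one⟩ ⟨α, β, h, rfl⟩

theorem DEAeff_le_one : DEAeff x y k S ≤ 1 :=
  Real.sSup_le (by rintro _ ⟨α, β, h, rfl⟩; exact h.sum_le_one) zero_le_one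

theorem sum_DEAeff_le_card : ∑ k, DEAeff x y k S ≤ K := by
  simpa using sum_le_sum fun k (_ : k ∈ univ) => (DEAeff_le_one : DEAeff x y k S ≤ 1)

theorem vJoint_eq_div {p : ℕ} (c : ℝ)
    (hle : ∀ S : Finset (Fin O), S.card = p → ∑ k, DEAeff x y k S ≤ c)
    (S₀ : Finset (Fin O)) (hS₀ : S₀.card = p) (hge : c ≤ ∑ k, DEAeff x y k S₀) :
    vJoint x y p = c / K := by
  have hub : c / K ∈ upperBounds
      {t | ∃ S : Finset (Fin O), S.card = p ∧ t = (1 / (K : ℝ)) * ∑ k, DEAeff x y k S} := by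
    rintro _ ⟨S, hS, rfl⟩
    rw [one_div_mul_eq_div]
    exact div_le_div_of_nonneg_right (hle S hS) K.cast_nonneg
  have hlow : c / K ≤ (1 / (K : ℝ)) * ∑ k, DEAeff x y k S₀ := by
    rw [one_div_mul_eq_div]
    exact div_le_div_of_nonneg_right hge K.cast_nonneg
  exact le_antisymm (csSup_le ⟨_, S₀, hS₀, rfl⟩ hub)
    (hlow.trans (le_csSup ⟨_, hub⟩ ⟨S₀, hS₀, rfl⟩))

end General

def unitInput (K : ℕ) : Fin K → Fin 1 → ℝ := fun _ _ => 1

def IsAdmissibleWeight {K O : ℕ} (y : Fin K → Fin O → ℝ) (S : Finset (Fin O))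
    (β : Fin O → ℝ) : Prop :=
  (∀ o, 0 ≤ β o) ∧ (∀ o, o ∉ S → β o = 0) ∧ ∀ j, ∑ o, β o * y j o ≤ 1

section UnitInput

variable {K O : ℕ} {y : Fin K → Fin O → ℝ} {k : Fin K} {S : Finset (Fin O)}

theorem DEAfeasible_unitInput_iff {α : Fin 1 → ℝ} {β : Fin O → ℝ} :
    DEAfeasible (unitInput K) y k S α β ↔ α = 1 ∧ IsAdmissibleWeight y S β := by
  simp only [DEAfeasible, IsAdmissibleWeight, unitInput, Fin.sum_univ_one, mul_one]
  constructor
  · rintro ⟨-, hβ, hS, hy, hα⟩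
    refine ⟨funext fun i => ?_, hβ, hS, fun j => (hy j).trans_eq hα⟩
    rwa [Subsingleton.elim i 0]
  · rintro ⟨rfl, hβ, hS, hy⟩
    exact ⟨fun _ => zero_le_one, hβ, hS, hy, rfl⟩

theorem DEAeff_unitInput_le {v : ℝ}
    (h : ∀ β, IsAdmissibleWeight y S β → ∑ o, β o * y k o ≤ v) :
    DEAeff (unitInput K) y k S ≤ v := by
  have hzero : IsAdmissibleWeight y S 0 := ⟨fun _ => le_rfl, fun _ _ => rfl, fun _ => by simp⟩
  refine csSup_le ⟨_, 1, 0, DEAfeasible_unitInput_iff.2 ⟨rfl, hzero⟩, rfl⟩ ?_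
  rintro _ ⟨α, β, hf, rfl⟩
  exact h β (DEAfeasible_unitInput_iff.1 hf).2

theorem DEAeff_unitInput_singleton_le {o : Fin O} {j : Fin K} (hk : 0 ≤ y k o)
    (hj : 0 < y j o) : DEAeff (unitInput K) y k {o} ≤ y k o / y j o := by
  refine DEAeff_unitInput_le fun β ⟨hβ, hS, hy⟩ => ?_
  have hsum : ∀ j, ∑ o', β o' * y j o' = β o * y j o := fun j =>
    sum_eq_single o (fun o' _ ho' => by rw [hS o' (by simpa using ho'), zero_mul]) (by simp)
  have hj1 : β o * y j o ≤ 1 := hsum j ▸ hy j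
  rw [hsum, le_div_iff₀ hj]
  calc β o * y k o * y j o = β o * y j o * y k o := by ring
    _ ≤ y k o := mul_le_of_le_one_left hk hj1

theorem vJoint_unitInput_eq_div {p : ℕ} (c : ℝ)
    (hle : ∀ S : Finset (Fin O), S.card = p → ∑ k, DEAeff (unitInput K) y k S ≤ c)
    (S₀ : Finset (Fin O)) (hS₀ : S₀.card = p) (β : Fin O → ℝ)
    (hβ : IsAdmissibleWeight y S₀ β) (hc : c ≤ ∑ k, ∑ o, β o * y k o) :
    vJoint (unitInput K) y p = c / K :=
  vJoint_eq_div c hle S₀ hS₀ <| hc.trans <|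
    sum_le_sum fun _ _ => le_DEAeff (DEAfeasible_unitInput_iff.2 ⟨rfl, hβ⟩)

end UnitInput

theorem yT1_nonneg (k : Fin 5) (o : Fin 4) : 0 ≤ yT1 k o := by
  fin_cases k <;> fin_cases o <;> norm_num [yT1]

theorem sum_DEAeff_T1_le_of_card_eq_one {S : Finset (Fin 4)} (hS : S.card = 1) :
    ∑ k, DEAeff xT1 yT1 k S ≤ 4 := by
  obtain ⟨o, rfl⟩ := card_eq_one.1 hS
  obtain ⟨j, hj⟩ : ∃ j, yT1 j o = 1 := by
    fin_cases o
    exacts [⟨4, rfl⟩, ⟨2, rfl⟩, ⟨3, rfl⟩, ⟨4, rfl⟩]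
  calc ∑ k, DEAeff xT1 yT1 k {o}
      ≤ ∑ k, yT1 k o / yT1 j o := sum_le_sum fun k _ =>
        DEAeff_unitInput_singleton_le (yT1_nonneg k o) (hj ▸ one_pos)
    _ ≤ 4 := by
      rw [hj]
      fin_cases o <;> simp [Fin.sum_univ_five, yT1] <;> norm_num

theorem finset_fin_four_of_card_eq_two : ∀ S : Finset (Fin 4), S.card = 2 →
    S = {0, 1} ∨ S = {0, 2} ∨ S = {0, 3} ∨ S = {1, 2} ∨ S = {1, 3} ∨ S = {2, 3} := by
  decide

theorem sum_DEAeff_T1_le_of_card_eq_two {S : Finset (Fin 4)} (hS : S.card = 2) :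
    ∑ k, DEAeff xT1 yT1 k S ≤ 13 / 3 := by
  -- per-DMU bounds on `E^(k)(S)`; for `S = {0, 1}` they are the exact efficiencies
  obtain ⟨b, hb, hsum⟩ : ∃ b : Fin 5 → ℝ,
      (∀ k β, IsAdmissibleWeight yT1 S β → ∑ o, β o * yT1 k o ≤ b k) ∧ ∑ k, b k ≤ 13 / 3 := by
    rcases finset_fin_four_of_card_eq_two S hS with rfl | rfl | rfl | rfl | rfl | rfl <;>
    [use ![2/3, 23/30, 1, 9/10, 1]; use ![19/30, 11/15, 4/5, 1, 1];
      use ![3/5, 7/10, 4/5, 9/10, 1]; use ![2/3, 2/3, 1, 1, 0]; use ![2/3, 2/3, 1, 0, 1];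
      use ![2/3, 2/3, 0, 1, 1]] <;>
    refine ⟨?_, by simp [Fin.sum_univ_five]; norm_num⟩
    all_goals
      rintro k β ⟨hβ, hS, hy⟩
      simp [Fin.forall_fin_succ, Fin.sum_univ_four, yT1] at hS hy ⊢
      fin_cases k <;> norm_num <;> linarith [hβ 0, hβ 1, hβ 2, hβ 3]
  exact (sum_le_sum fun k _ => DEAeff_unitInput_le (hb k)).trans hsum

theorem vJoint_T1_one : vJoint xT1 yT1 1 = 4 / 5 := by
  refine (vJoint_unitInput_eq_div 4 (fun _ => sum_DEAeff_T1_le_of_card_eq_one) {0} rfl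
    ![1, 0, 0, 0] ?_ ?_).trans (by norm_num)
  · refine ⟨?_, ?_, ?_⟩ <;> simp [Fin.forall_fin_succ, Fin.sum_univ_four, yT1]
    norm_num
  · simp [Fin.sum_univ_five, Fin.sum_univ_four, yT1]
    norm_num

theorem vJoint_T1_two : vJoint xT1 yT1 2 = 13 / 15 := by
  refine (vJoint_unitInput_eq_div (13 / 3) (fun _ => sum_DEAeff_T1_le_of_card_eq_two) {0, 1}
    rfl ![1, 1/5, 0, 0] ?_ ?_).trans (by norm_num)
  · refine ⟨?_, ?_, ?_⟩ <;> simp [Fin.forall_fin_succ, Fin.sum_univ_four, yT1]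
    norm_num
  · simp [Fin.sum_univ_five, Fin.sum_univ_four, yT1]
    norm_num

theorem vJoint_T1_three : vJoint xT1 yT1 3 = 1 := by
  refine (vJoint_unitInput_eq_div 5 (fun _ _ => sum_DEAeff_le_card) {1, 2, 3} rfl
    ![0, 1, 1, 1] ?_ ?_).trans (by norm_num)
  · refine ⟨?_, ?_, ?_⟩ <;> simp [Fin.forall_fin_succ, Fin.sum_univ_four, yT1]
    norm_num
  · simp [Fin.sum_univ_five, Fin.sum_univ_four, yT1]
    norm_num

/-- The joint selection value `v(p)` is not concave in `p` in general:
for the Table 1 instance, `v(1) = 4/5`, `v(2) = 13/15`, `v(3) = 1`, so that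
`v(3) − v(2) > v(2) − v(1)`. -/
theorem table1_vJoint_not_concave :
    vJoint xT1 yT1 1 = 4 / 5 ∧
    vJoint xT1 yT1 2 = 13 / 15 ∧
    vJoint xT1 yT1 3 = 1 ∧
    vJoint xT1 yT1 3 - vJoint xT1 yT1 2 > vJoint xT1 yT1 2 - vJoint xT1 yT1 1 := by
  refine ⟨vJoint_T1_one, vJoint_T1_two, vJoint_T1_three, ?_⟩
  rw [vJoint_T1_one, vJoint_T1_two, vJoint_T1_three]
  norm_num
end
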